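/- Let T be a balanced tree. Then the following are equivalent: (a) there are no two leaves ℓ₁, ℓ₂ of T with dist(ℓ₁, ℓ₂) = 4; (b) every vertex of height 2 has exactly one neighbor of height 1. -/
import Mathlib


open SimpleGraph Set

/-- Open neighborhood of a set of vertices. -/
def nbhd {V : Type*} (G : SimpleGraph V) (D : Set V) : Set V :=
  {u | ∃ v ∈ D, G.Adj v u}

/-- Total dominating set. -/
def IsTDS {V : Type*} (G : SimpleGraph V) (D : Set V) : Prop :=
  nbhd G D = Set.univ

/-- Minimal total dominating set. -/
def IsMinTDS {V : Type*} (G : SimpleGraph V) (D : Set V) : Prop :=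
  IsTDS G D ∧ ∀ D' : Set V, D' ⊂ D → ¬ IsTDS G D'

/-- Well-totally dominated graph: all minimal TDSs have the same size. -/
def WTD {V : Type*} (G : SimpleGraph V) : Prop :=
  ∀ D₁ D₂ : Set V, IsMinTDS G D₁ → IsMinTDS G D₂ → D₁.ncard = D₂.ncard

/-- A leaf is a vertex of degree 1. -/
def IsLeaf {V : Type*} (G : SimpleGraph V) (v : V) : Prop :=
  (G.neighborSet v).ncard = 1

/-- Height of a vertex: minimum distance to a leaf. -/
noncomputable def heightV {V : Type*} (G : SimpleGraph V) (v : V) : ℕ :=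
  sInf {d | ∃ ℓ, IsLeaf G ℓ ∧ G.dist v ℓ = d}

/-- Height of a graph: maximum vertex height. -/
noncomputable def heightG {V : Type*} (G : SimpleGraph V) : ℕ :=
  sSup {d | ∃ v, heightV G v = d}

/-- Balanced: no two vertices of the same height are adjacent. -/
def IsBalanced {V : Type*} (G : SimpleGraph V) : Prop :=
  ∀ u v : V, G.Adj u v → heightV G u ≠ heightV G v

/-- Minimal with respect to open neighborhoods. -/
def IsMinNbhd {V : Type*} (G : SimpleGraph V) (D : Set V) : Prop :=
  ∀ D' : Set V, D' ⊂ D → nbhd G D' ≠ nbhd G D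

section AuxLemmas
variable {V : Type*} {T : SimpleGraph V}

lemma leaf_unique_nbr {ℓ a b : V} (hℓ : IsLeaf T ℓ)
    (ha : T.Adj ℓ a) (hb : T.Adj ℓ b) : a = b := by
  obtain ⟨x, hx⟩ := Set.ncard_eq_one.mp hℓ
  have h1 : a ∈ T.neighborSet ℓ := ha
  have h2 : b ∈ T.neighborSet ℓ := hb
  rw [hx, Set.mem_singleton_iff] at h1 h2
  rw [h1, h2]

lemma height_zero_of_leaf {ℓ : V} (hℓ : IsLeaf T ℓ) : heightV T ℓ = 0 :=
  Nat.sInf_eq_zero.mpr (Or.inl ⟨ℓ, hℓ, SimpleGraph.dist_self⟩)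

lemma height_le_dist {v ℓ : V} (hℓ : IsLeaf T ℓ) : heightV T v ≤ T.dist v ℓ :=
  Nat.sInf_le ⟨ℓ, hℓ, rfl⟩

lemma exists_leaf_dist {v : V} (h : heightV T v ≠ 0) :
    ∃ ℓ, IsLeaf T ℓ ∧ T.dist v ℓ = heightV T v := by
  have hne : {d | ∃ ℓ, IsLeaf T ℓ ∧ T.dist v ℓ = d}.Nonempty := by
    by_contra hemp
    rw [Set.not_nonempty_iff_eq_empty] at hemp
    exact h (by simp [heightV, hemp])
  exact Nat.sInf_mem hne

lemma leaf_of_height_zero (hconn : T.Connected) {v ℓ₀ : V} (hℓ₀ : IsLeaf T ℓ₀)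
    (h : heightV T v = 0) : IsLeaf T v := by
  have hne : {d | ∃ ℓ, IsLeaf T ℓ ∧ T.dist v ℓ = d}.Nonempty := ⟨_, ℓ₀, hℓ₀, rfl⟩
  obtain ⟨ℓ, hℓ, hd⟩ := Nat.sInf_mem hne
  rw [show sInf _ = heightV T v from rfl, h] at hd
  rwa [(hconn.dist_eq_zero_iff).mp hd]

lemma height_adj_le (hconn : T.Connected) {u v ℓ₀ : V} (hℓ₀ : IsLeaf T ℓ₀)
    (hadj : T.Adj u v) : heightV T u ≤ heightV T v + 1 := by
  by_cases h0 : heightV T v = 0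
  · have hv : IsLeaf T v := leaf_of_height_zero hconn hℓ₀ h0
    have := height_le_dist (T := T) (v := u) hv
    rw [SimpleGraph.dist_eq_one_iff_adj.mpr hadj] at this
    omega
  · obtain ⟨ℓ, hℓ, hd⟩ := exists_leaf_dist h0
    have h1 := height_le_dist (T := T) (v := u) hℓ
    have h2 := hconn.dist_triangle (u := u) (v := v) (w := ℓ)
    rw [SimpleGraph.dist_eq_one_iff_adj.mpr hadj] at h2
    omega

lemma getVert_last {u v : V} (p : T.Walk u v) {n : ℕ} (h : p.length = n) :
    p.getVert n = v := by rw [← h]; exact p.getVert_length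

end AuxLemmas

theorem stmt10 {V : Type*} [Fintype V] (T : SimpleGraph V) (htree : T.IsTree)
    (hbal : IsBalanced T) :
    (¬ ∃ ℓ₁ ℓ₂ : V, IsLeaf T ℓ₁ ∧ IsLeaf T ℓ₂ ∧ T.dist ℓ₁ ℓ₂ = 4) ↔
      ∀ v : V, heightV T v = 2 →
        ({u ∈ T.neighborSet v | heightV T u = 1}).ncard = 1 := by
  have hconn := htree.isConnected
  constructor
  · intro h v hv2
    -- get a leaf at distance 2
    obtain ⟨ℓ₀, hℓ₀, hd₀⟩ := exists_leaf_dist (T := T) (v := v) (by omega)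
    rw [hv2] at hd₀
    obtain ⟨p, hp⟩ := (hconn v ℓ₀).exists_walk_length_eq_dist
    rw [hd₀] at hp
    set w := p.getVert 1 with hw
    have hadj1 : T.Adj v w := by
      have := p.adj_getVert_succ (i := 0) (by omega)
      rwa [p.getVert_zero] at this
    have hadj2 : T.Adj w ℓ₀ := by
      have := p.adj_getVert_succ (i := 1) (by omega)
      rwa [getVert_last p hp] at this
    have hw1 : heightV T w = 1 := by
      have h1 : heightV T w ≤ 1 := by
        have := height_le_dist (T := T) (v := w) hℓ₀
        rw [SimpleGraph.dist_eq_one_iff_adj.mpr hadj2] at this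
        exact this
      have h2 : heightV T v ≤ heightV T w + 1 := height_adj_le hconn hℓ₀ hadj1
      omega
    -- key: any two neighbors of height 1 are equal
    have key : ∀ u₁ u₂ : V, T.Adj v u₁ → heightV T u₁ = 1 →
        T.Adj v u₂ → heightV T u₂ = 1 → u₁ = u₂ := by
      intro u₁ u₂ ha1 hh1 ha2 hh2
      by_contra hne
      obtain ⟨ℓ₁, hℓ₁, hd₁⟩ := exists_leaf_dist (T := T) (v := u₁) (by omega)
      obtain ⟨ℓ₂, hℓ₂, hd₂⟩ := exists_leaf_dist (T := T) (v := u₂) (by omega)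
      rw [hh1] at hd₁; rw [hh2] at hd₂
      have hadjℓ₁ : T.Adj u₁ ℓ₁ := SimpleGraph.dist_eq_one_iff_adj.mp hd₁
      have hadjℓ₂ : T.Adj u₂ ℓ₂ := SimpleGraph.dist_eq_one_iff_adj.mp hd₂
      have hℓne : ℓ₁ ≠ ℓ₂ := by
        intro he
        exact hne (leaf_unique_nbr hℓ₁ hadjℓ₁.symm (he ▸ hadjℓ₂.symm))
      -- dist ℓ₁ ℓ₂ ≤ 4
      have hle : T.dist ℓ₁ ℓ₂ ≤ 4 := by
        have t1 := hconn.dist_triangle (u := ℓ₁) (v := u₁) (w := ℓ₂)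
        have t2 := hconn.dist_triangle (u := u₁) (v := v) (w := ℓ₂)
        have t3 := hconn.dist_triangle (u := v) (v := u₂) (w := ℓ₂)
        rw [SimpleGraph.dist_eq_one_iff_adj.mpr hadjℓ₁.symm] at t1
        rw [SimpleGraph.dist_eq_one_iff_adj.mpr ha1.symm] at t2
        rw [SimpleGraph.dist_eq_one_iff_adj.mpr ha2] at t3
        rw [SimpleGraph.dist_eq_one_iff_adj.mpr hadjℓ₂] at t3
        omega
      have hne0 : T.dist ℓ₁ ℓ₂ ≠ 0 := fun h0 => hℓne ((hconn.dist_eq_zero_iff).mp h0)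
      have hne1 : T.dist ℓ₁ ℓ₂ ≠ 1 := by
        intro h1
        have hadj := SimpleGraph.dist_eq_one_iff_adj.mp h1
        exact hbal ℓ₁ ℓ₂ hadj (by rw [height_zero_of_leaf hℓ₁, height_zero_of_leaf hℓ₂])
      have hne2 : T.dist ℓ₁ ℓ₂ ≠ 2 := by
        intro h2
        obtain ⟨q, hq⟩ := (hconn ℓ₁ ℓ₂).exists_walk_length_eq_dist
        rw [h2] at hq
        set m := q.getVert 1 with hm
        have a1 : T.Adj ℓ₁ m := by
          have := q.adj_getVert_succ (i := 0) (by omega); rwa [q.getVert_zero] at this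
        have a2 : T.Adj m ℓ₂ := by
          have := q.adj_getVert_succ (i := 1) (by omega); rwa [getVert_last q hq] at this
        have e1 : m = u₁ := leaf_unique_nbr hℓ₁ a1 hadjℓ₁.symm
        have e2 : m = u₂ := leaf_unique_nbr hℓ₂ a2.symm hadjℓ₂.symm
        exact hne (e1 ▸ e2)
      have hne3 : T.dist ℓ₁ ℓ₂ ≠ 3 := by
        intro h3
        obtain ⟨q, hq⟩ := (hconn ℓ₁ ℓ₂).exists_walk_length_eq_dist
        rw [h3] at hq
        set a := q.getVert 1 with ha
        set b := q.getVert 2 with hb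
        have a1 : T.Adj ℓ₁ a := by
          have := q.adj_getVert_succ (i := 0) (by omega); rwa [q.getVert_zero] at this
        have a2 : T.Adj a b := q.adj_getVert_succ (i := 1) (by omega)
        have a3 : T.Adj b ℓ₂ := by
          have := q.adj_getVert_succ (i := 2) (by omega); rwa [getVert_last q hq] at this
        have e1 : a = u₁ := leaf_unique_nbr hℓ₁ a1 hadjℓ₁.symm
        have e2 : b = u₂ := leaf_unique_nbr hℓ₂ a3.symm hadjℓ₂.symm
        rw [e1, e2] at a2
        exact hbal u₁ u₂ a2 (by rw [hh1, hh2])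
      exact h ⟨ℓ₁, ℓ₂, hℓ₁, hℓ₂, by omega⟩
    rw [Set.ncard_eq_one]
    refine ⟨w, ?_⟩
    ext u
    simp only [Set.mem_setOf_eq, Set.mem_singleton_iff, SimpleGraph.mem_neighborSet]
    constructor
    · rintro ⟨h1, h2⟩; exact key u w h1 h2 hadj1 hw1
    · rintro rfl; exact ⟨hadj1, hw1⟩
  · intro h ⟨ℓ₁, ℓ₂, hℓ₁, hℓ₂, hd⟩
    obtain ⟨p, hp⟩ := (hconn ℓ₁ ℓ₂).exists_walk_length_eq_dist
    rw [hd] at hp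
    set a := p.getVert 1 with ha
    set v := p.getVert 2 with hv
    set b := p.getVert 3 with hb
    have a1 : T.Adj ℓ₁ a := by
      have := p.adj_getVert_succ (i := 0) (by omega); rwa [p.getVert_zero] at this
    have a2 : T.Adj a v := p.adj_getVert_succ (i := 1) (by omega)
    have a3 : T.Adj v b := p.adj_getVert_succ (i := 2) (by omega)
    have a4 : T.Adj b ℓ₂ := by
      have := p.adj_getVert_succ (i := 3) (by omega); rwa [getVert_last p hp] at this
    have hha : heightV T a = 1 := by
      have h1 : heightV T a ≤ 1 := by
        have := height_le_dist (T := T) (v := a) hℓ₁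
        rwa [SimpleGraph.dist_eq_one_iff_adj.mpr a1.symm] at this
      have h2 : heightV T a ≠ 0 := by
        intro h0
        exact hbal ℓ₁ a a1 (by rw [height_zero_of_leaf hℓ₁, h0])
      omega
    have hhb : heightV T b = 1 := by
      have h1 : heightV T b ≤ 1 := by
        have := height_le_dist (T := T) (v := b) hℓ₂
        rwa [SimpleGraph.dist_eq_one_iff_adj.mpr a4] at this
      have h2 : heightV T b ≠ 0 := by
        intro h0
        exact hbal b ℓ₂ a4 (by rw [height_zero_of_leaf hℓ₂, h0])
      omega
    have hab : a ≠ b := by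
      intro he
      have a4' : T.Adj a ℓ₂ := by rw [he]; exact a4
      have t1 := hconn.dist_triangle (u := ℓ₁) (v := a) (w := ℓ₂)
      rw [SimpleGraph.dist_eq_one_iff_adj.mpr a1] at t1
      rw [SimpleGraph.dist_eq_one_iff_adj.mpr a4'] at t1
      omega
    have hhv : heightV T v = 2 := by
      have h1 : heightV T v ≤ 2 := by
        obtain ⟨ℓ, hℓ, hdl⟩ := exists_leaf_dist (T := T) (v := a) (by omega)
        rw [hha] at hdl
        have t1 := hconn.dist_triangle (u := v) (v := a) (w := ℓ)
        rw [SimpleGraph.dist_eq_one_iff_adj.mpr a2.symm, hdl] at t1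
        have := height_le_dist (T := T) (v := v) hℓ
        omega
      have h2 : heightV T v ≠ 1 := fun h1 => hbal a v a2 (by rw [hha, h1])
      have h3 : heightV T v ≠ 0 := by
        intro h0
        have hvleaf := leaf_of_height_zero hconn hℓ₁ h0
        exact hab (leaf_unique_nbr hvleaf a2.symm a3)
      omega
    have := h v hhv
    obtain ⟨x, hx⟩ := Set.ncard_eq_one.mp this
    have hma : a ∈ {u ∈ T.neighborSet v | heightV T u = 1} := ⟨a2.symm, hha⟩
    have hmb : b ∈ {u ∈ T.neighborSet v | heightV T u = 1} := ⟨a3, hhb⟩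
    rw [hx, Set.mem_singleton_iff] at hma hmb
    exact hab (hma.trans hmb.symm)
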